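/- arXiv:2510.17527 — 2 statements merged into one kernel-verified Lean document; each statement's English description precedes it below -/
import Mathlib

section
/- Let C be a differential graded algebra over F₂ with cohomology algebra H. Let f₁: H → Ker δ be an F₂-linear graded map inducing the identity on cohomology (i.e., the class of f₁(x) is x for every x ∈ H), and let f₂: H ⊗ H → C be an F₂-linear graded map of degree −1 satisfying δ(f₂(x⊗y)) = f₁(xy) + f₁(x)f₁(y) for all homogeneous x, y ∈ H. Define Φ₃: H^{⊗3} → C (of degree −1) by Φ₃(x⊗y⊗z) := f₁(x)f₂(y⊗z) + f₂(x⊗y)f₁(z) + f₂((xy)⊗z + x⊗(yz)). Then Φ₃ takes values in the cocycles of C: δ(Φ₃(x⊗y⊗z)) = 0 for all homogeneous x, y, z ∈ H. -/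
open TensorProduct

/-- The field `F₂`. -/
abbrev Ftwo := ZMod 2

/- A differential graded algebra (DGA) over `F₂` is a `ℤ`-graded associative unital
`F₂`-algebra `C` (grading `𝒜 : ℤ → Submodule Ftwo C` with `[GradedAlgebra 𝒜]`) together
with an `F₂`-linear differential `δ : C → C` satisfying `δ ∘ δ = 0`, the Leibniz rule
`δ(xy) = δ(x)y + xδ(y)`, and `δ (𝒜 n) ⊆ 𝒜 (n+1)`.  Below we construct its cohomology
algebra `H = Ker δ / Im δ`. -/
variable (C : Type) [Ring C] [Algebra Ftwo C] (δ : C →ₗ[Ftwo] C)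

lemma dga_delta_add (a b : C) (ha : δ a = 0) (hb : δ b = 0) : δ (a + b) = 0 := by
  rw [map_add, ha, hb, add_zero]

lemma dga_delta_mul (hleib : ∀ x y : C, δ (x * y) = δ x * y + x * δ y)
    (a b : C) (ha : δ a = 0) (hb : δ b = 0) : δ (a * b) = 0 := by
  rw [hleib, ha, hb, zero_mul, mul_zero, add_zero]

lemma dga_delta_algebraMap (hleib : ∀ x y : C, δ (x * y) = δ x * y + x * δ y)
    (r : Ftwo) : δ (algebraMap Ftwo C r) = 0 := by
  have h1 : δ 1 = 0 := by
    have h := hleib 1 1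
    rw [one_mul, mul_one, one_mul] at h
    exact (left_eq_add.mp h)
  rw [Algebra.algebraMap_eq_smul_one, map_smul, h1, smul_zero]

/-- The subalgebra `Ker δ ⊆ C` of cocycles. -/
def cocycles (hleib : ∀ x y : C, δ (x * y) = δ x * y + x * δ y) : Subalgebra Ftwo C where
  carrier := {x | δ x = 0}
  add_mem' := fun ha hb => dga_delta_add C δ _ _ ha hb
  mul_mem' := fun ha hb => dga_delta_mul C δ hleib _ _ ha hb
  algebraMap_mem' := fun r => dga_delta_algebraMap C δ hleib r

lemma mem_cocycles (hleib : ∀ x y : C, δ (x * y) = δ x * y + x * δ y) (x : C) :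
    x ∈ cocycles C δ hleib ↔ δ x = 0 := Iff.rfl

/-- The coboundaries `Im δ` as a two-sided ideal of the algebra of cocycles. -/
def cobnd (hleib : ∀ x y : C, δ (x * y) = δ x * y + x * δ y) :
    TwoSidedIdeal ↥(cocycles C δ hleib) :=
  TwoSidedIdeal.mk' {z | (z : C) ∈ LinearMap.range δ}
    ⟨0, by simp⟩
    (by rintro x y ⟨e, he⟩ ⟨f, hf⟩; exact ⟨e + f, by rw [map_add, he, hf]; rfl⟩)
    (by rintro x ⟨e, he⟩; exact ⟨-e, by rw [map_neg, he]; rfl⟩)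
    (by
      rintro x y ⟨e, he⟩
      refine ⟨(x : C) * e, ?_⟩
      have hx : δ (x : C) = 0 := x.2
      rw [hleib, hx, he, zero_mul, zero_add]
      rfl)
    (by
      rintro x y ⟨e, he⟩
      refine ⟨e * (y : C), ?_⟩
      have hy : δ (y : C) = 0 := y.2
      rw [hleib, hy, he, mul_zero, add_zero]
      rfl)

variable (hleib : ∀ x y : C, δ (x * y) = δ x * y + x * δ y)

/-- The cohomology algebra `H = Ker δ / Im δ` of the DGA `(C, δ)`, as the quotient of the
ring of cocycles by the two-sided ideal of coboundaries. -/
abbrev Hcoh : Type := (cobnd C δ hleib).ringCon.Quotient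

/-- The quotient of an `F₂`-algebra by a ring congruence is again an `F₂`-algebra;
in particular the cohomology `H` is an `F₂`-algebra. -/
noncomputable instance ringConQuotientAlgebra (R : Type) [Ring R] [Algebra Ftwo R]
    (c : RingCon R) : Algebra Ftwo c.Quotient where
  smul r x := r • x
  algebraMap := (c.mk').comp (algebraMap Ftwo R)
  commutes' := by
    intro r x
    induction x using Quotient.ind
    rename_i z
    show ((algebraMap Ftwo R r : R) : c.Quotient) * (z : c.Quotient)
        = (z : c.Quotient) * ((algebraMap Ftwo R r : R) : c.Quotient)
    rw [← RingCon.coe_mul, ← RingCon.coe_mul, Algebra.commutes]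
  smul_def' := by
    intro r x
    induction x using Quotient.ind
    rename_i z
    show r • (z : c.Quotient) = ((algebraMap Ftwo R r : R) : c.Quotient) * (z : c.Quotient)
    rw [← RingCon.coe_smul, ← RingCon.coe_mul, Algebra.smul_def]

/-- The cohomology class in `H` of a cocycle `x ∈ C`. -/
def cls (x : C) (h : δ x = 0) : Hcoh C δ hleib :=
  (cobnd C δ hleib).ringCon.mk' ⟨x, (mem_cocycles C δ hleib x).mpr h⟩

/-- The grading of the cohomology algebra `H`: `Hgrading 𝒜 n` is spanned by the classes
of homogeneous cocycles of degree `n`. -/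
noncomputable def Hgrading (𝒜 : ℤ → Submodule Ftwo C) (n : ℤ) : Submodule Ftwo (Hcoh C δ hleib) :=
  Submodule.span Ftwo {h | ∃ (x : C) (hx : δ x = 0), x ∈ 𝒜 n ∧ h = cls C δ hleib x hx}

/-- The triple Massey product `⟨x,y,z⟩ ⊆ H`: the set of cohomology classes of
`X·E₂ + E₁·Z` over all defining systems `{X, Y, Z, E₁, E₂}` (cocycles `X, Y, Z`
representing `x, y, z`, and cochains `E₁, E₂` with `δE₁ = XY`, `δE₂ = YZ`). -/
def massey (x y z : Hcoh C δ hleib) : Set (Hcoh C δ hleib) :=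
  {w | ∃ (X Y Z E₁ E₂ : C) (hX : δ X = 0) (hY : δ Y = 0) (hZ : δ Z = 0),
    cls C δ hleib X hX = x ∧ cls C δ hleib Y hY = y ∧ cls C δ hleib Z hZ = z ∧
    δ E₁ = X * Y ∧ δ E₂ = Y * Z ∧
    ∃ hc : δ (X * E₂ + E₁ * Z) = 0, cls C δ hleib (X * E₂ + E₁ * Z) hc = w}

/-- The map `Φ₃(x⊗y⊗z) = f₁(x)f₂(y⊗z) + f₂(x⊗y)f₁(z) + f₂((xy)⊗z + x⊗(yz))`. -/
noncomputable def Phi3 (f₁ : Hcoh C δ hleib →ₗ[Ftwo] C)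
    (f₂ : Hcoh C δ hleib ⊗[Ftwo] Hcoh C δ hleib →ₗ[Ftwo] C)
    (x y z : Hcoh C δ hleib) : C :=
  f₁ x * f₂ (y ⊗ₜ z) + f₂ (x ⊗ₜ y) * f₁ z + f₂ ((x * y) ⊗ₜ z + x ⊗ₜ (y * z))

theorem Ftwo.add_self_eq_zero {M : Type*} [AddCommGroup M] [Module Ftwo M] (a : M) :
    a + a = 0 := by
  rw [← two_smul Ftwo a, show (2 : Ftwo) = 0 from rfl, zero_smul]

theorem delta_Phi3_eq_zero (f₁ : Hcoh C δ hleib →ₗ[Ftwo] C) (hf₁ker : ∀ x, δ (f₁ x) = 0)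
    (f₂ : Hcoh C δ hleib ⊗[Ftwo] Hcoh C δ hleib →ₗ[Ftwo] C)
    (hf₂δ : ∀ x y : Hcoh C δ hleib, δ (f₂ (x ⊗ₜ y)) = f₁ (x * y) + f₁ x * f₁ y)
    (x y z : Hcoh C δ hleib) : δ (Phi3 C δ hleib f₁ f₂ x y z) = 0 := by
  -- by associativity in `H`, each of four products occurs twice, and `2 = 0` in `F₂`
  calc δ (Phi3 C δ hleib f₁ f₂ x y z)
      = f₁ x * (f₁ (y * z) + f₁ y * f₁ z) + (f₁ (x * y) + f₁ x * f₁ y) * f₁ z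
          + (f₁ (x * y * z) + f₁ (x * y) * f₁ z + (f₁ (x * (y * z)) + f₁ x * f₁ (y * z))) := by
        simp only [Phi3, map_add, hleib, hf₁ker, hf₂δ, mul_zero, zero_mul, add_zero, zero_add]
    _ = (f₁ x * f₁ (y * z) + f₁ x * f₁ y * f₁ z + f₁ (x * y) * f₁ z + f₁ (x * (y * z)))
          + (f₁ x * f₁ (y * z) + f₁ x * f₁ y * f₁ z + f₁ (x * y) * f₁ z + f₁ (x * (y * z))) := by
        rw [mul_assoc x y z]; noncomm_ring
    _ = 0 := Ftwo.add_self_eq_zero _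

theorem stmt13 (𝒜 : ℤ → Submodule Ftwo C)
    (f₁ : Hcoh C δ hleib →ₗ[Ftwo] C)
    (hf₁ker : ∀ x, δ (f₁ x) = 0)
    (f₂ : Hcoh C δ hleib ⊗[Ftwo] Hcoh C δ hleib →ₗ[Ftwo] C)
    (hf₂δ : ∀ x y : Hcoh C δ hleib,
      δ (f₂ (x ⊗ₜ y)) = f₁ (x * y) + f₁ x * f₁ y) :
    ∀ (p q r : ℤ) (x y z : Hcoh C δ hleib),
      x ∈ Hgrading C δ hleib 𝒜 p → y ∈ Hgrading C δ hleib 𝒜 q →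
      z ∈ Hgrading C δ hleib 𝒜 r →
        δ (Phi3 C δ hleib f₁ f₂ x y z) = 0 :=
  fun _ _ _ x y z _ _ _ => delta_Phi3_eq_zero C δ hleib f₁ hf₁ker f₂ hf₂δ x y z
end

section
/- Let C be a differential graded algebra over F₂ with cohomology algebra H, let f₁: H → Ker δ be an F₂-linear graded map inducing the identity on cohomology, let f₂: H ⊗ H → C be an F₂-linear graded map of degree −1 with δ(f₂(x⊗y)) = f₁(xy) + f₁(x)f₁(y), and let Φ₃(x⊗y⊗z) := f₁(x)f₂(y⊗z) + f₂(x⊗y)f₁(z) + f₂((xy)⊗z + x⊗(yz)). Suppose there exists an F₂-linear graded map η: H ⊗ H → Ker δ of degree −1 such that for all homogeneous x, y, z ∈ H the cohomology class of Φ₃(x⊗y⊗z) equals x·[η(y⊗z)] + [η((xy)⊗z)] + [η(x⊗(yz))] + [η(x⊗y)]·z in H, where [w] denotes the class of a cocycle w. Then, setting f̃₂ := f₂ + η, the map f̃₂ still satisfies δ(f̃₂(x⊗y)) = f₁(xy) + f₁(x)f₁(y), and the modified map Φ̃₃(x⊗y⊗z) := f₁(x)f̃₂(y⊗z) + f̃₂(x⊗y)f₁(z)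 + f̃₂((xy)⊗z + x⊗(yz)) has cohomologically trivial values: the class of Φ̃₃(x⊗y⊗z) is 0 in H for all homogeneous x, y, z ∈ H. -/
open TensorProduct

/- A differential graded algebra (DGA) over `F₂` is a `ℤ`-graded associative unital
`F₂`-algebra `C` (grading `𝒜 : ℤ → Submodule Ftwo C` with `[GradedAlgebra 𝒜]`) together
with an `F₂`-linear differential `δ : C → C` satisfying `δ ∘ δ = 0`, the Leibniz rule
`δ(xy) = δ(x)y + xδ(y)`, and `δ (𝒜 n) ⊆ 𝒜 (n+1)`.  Below we construct its cohomology
algebra `H = Ker δ / Im δ`. -/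
variable (C : Type) [Ring C] [Algebra Ftwo C] (δ : C →ₗ[Ftwo] C)

variable (hleib : ∀ x y : C, δ (x * y) = δ x * y + x * δ y)

/-!
`Φ₃` is additive in its second argument, so `Φ̃₃ = Φ₃ + Φ₃(η)`, where `Φ₃(η)` is built from `η`
in place of `f₂`. Since `η` takes values in cocycles and `f₁` is a section of `Ker δ → H`, `Φ₃(η)`
is a cocycle whose class is the Hochschild coboundary of `[η]`, which by hypothesis is `[Φ₃]`.
The two classes cancel because `2 = 0` in `H`.
-/

section Phi3

variable {C δ hleib}

lemma cls_add {a b : C} (ha : δ a = 0) (hb : δ b = 0) (hab : δ (a + b) = 0) :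
    cls C δ hleib (a + b) hab = cls C δ hleib a ha + cls C δ hleib b hb :=
  rfl

variable (f₁ : Hcoh C δ hleib →ₗ[Ftwo] C)

lemma Phi3_add_right (f₂ g : Hcoh C δ hleib ⊗[Ftwo] Hcoh C δ hleib →ₗ[Ftwo] C)
    (x y z : Hcoh C δ hleib) :
    Phi3 C δ hleib f₁ (f₂ + g) x y z = Phi3 C δ hleib f₁ f₂ x y z + Phi3 C δ hleib f₁ g x y z := by
  simp only [Phi3, LinearMap.add_apply, mul_add, add_mul]
  abel

variable {f₁} {g : Hcoh C δ hleib ⊗[Ftwo] Hcoh C δ hleib →ₗ[Ftwo] C}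

lemma delta_Phi3_of_cocycles (hf₁ : ∀ x, δ (f₁ x) = 0) (hg : ∀ w, δ (g w) = 0)
    (x y z : Hcoh C δ hleib) : δ (Phi3 C δ hleib f₁ g x y z) = 0 := by
  have hf₁' : ∀ x, f₁ x ∈ cocycles C δ hleib := hf₁
  have hg' : ∀ w, g w ∈ cocycles C δ hleib := hg
  exact add_mem (add_mem (mul_mem (hf₁' x) (hg' _)) (mul_mem (hg' _) (hf₁' z))) (hg' _)

lemma cls_Phi3_of_cocycles (hf₁ : ∀ x, δ (f₁ x) = 0)
    (hf₁id : ∀ x, cls C δ hleib (f₁ x) (hf₁ x) = x) (hg : ∀ w, δ (g w) = 0)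
    (x y z : Hcoh C δ hleib) :
    cls C δ hleib (Phi3 C δ hleib f₁ g x y z) (delta_Phi3_of_cocycles hf₁ hg x y z) =
      x * cls C δ hleib (g (y ⊗ₜ z)) (hg _)
        + cls C δ hleib (g ((x * y) ⊗ₜ z)) (hg _)
        + cls C δ hleib (g (x ⊗ₜ (y * z))) (hg _)
        + cls C δ hleib (g (x ⊗ₜ y)) (hg _) * z := by
  have hexpand : cls C δ hleib (Phi3 C δ hleib f₁ g x y z) (delta_Phi3_of_cocycles hf₁ hg x y z) =
      cls C δ hleib (f₁ x) (hf₁ x) * cls C δ hleib (g (y ⊗ₜ z)) (hg _)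
        + cls C δ hleib (g (x ⊗ₜ y)) (hg _) * cls C δ hleib (f₁ z) (hf₁ z)
        + (cls C δ hleib (g ((x * y) ⊗ₜ z)) (hg _) + cls C δ hleib (g (x ⊗ₜ (y * z))) (hg _)) := by
    simp only [Phi3, map_add]
    rfl
  rw [hexpand, hf₁id, hf₁id]
  abel

end Phi3

theorem stmt15 (𝒜 : ℤ → Submodule Ftwo C)
    (f₁ : Hcoh C δ hleib →ₗ[Ftwo] C)
    (hf₁ker : ∀ x, δ (f₁ x) = 0)
    (hf₁id : ∀ x, cls C δ hleib (f₁ x) (hf₁ker x) = x)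
    (f₂ : Hcoh C δ hleib ⊗[Ftwo] Hcoh C δ hleib →ₗ[Ftwo] C)
    (hf₂δ : ∀ x y : Hcoh C δ hleib,
      δ (f₂ (x ⊗ₜ y)) = f₁ (x * y) + f₁ x * f₁ y)
    (η : Hcoh C δ hleib ⊗[Ftwo] Hcoh C δ hleib →ₗ[Ftwo] C)
    (hηker : ∀ w, δ (η w) = 0)
    (hcobound : ∀ (p q r : ℤ) (x y z : Hcoh C δ hleib),
      x ∈ Hgrading C δ hleib 𝒜 p → y ∈ Hgrading C δ hleib 𝒜 q →
      z ∈ Hgrading C δ hleib 𝒜 r →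
        ∃ hΦ : δ (Phi3 C δ hleib f₁ f₂ x y z) = 0,
          cls C δ hleib (Phi3 C δ hleib f₁ f₂ x y z) hΦ =
            x * cls C δ hleib (η (y ⊗ₜ z)) (hηker _)
              + cls C δ hleib (η ((x * y) ⊗ₜ z)) (hηker _)
              + cls C δ hleib (η (x ⊗ₜ (y * z))) (hηker _)
              + cls C δ hleib (η (x ⊗ₜ y)) (hηker _) * z) :
    (∀ x y : Hcoh C δ hleib,
      δ ((f₂ + η) (x ⊗ₜ y)) = f₁ (x * y) + f₁ x * f₁ y) ∧
    (∀ (p q r : ℤ) (x y z : Hcoh C δ hleib),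
      x ∈ Hgrading C δ hleib 𝒜 p → y ∈ Hgrading C δ hleib 𝒜 q →
      z ∈ Hgrading C δ hleib 𝒜 r →
        ∃ hΦ : δ (Phi3 C δ hleib f₁ (f₂ + η) x y z) = 0,
          cls C δ hleib (Phi3 C δ hleib f₁ (f₂ + η) x y z) hΦ = 0) := by
  refine ⟨fun x y => by rw [LinearMap.add_apply, map_add, hf₂δ, hηker, add_zero], ?_⟩
  intro p q r x y z hx hy hz
  obtain ⟨hΦ, hcls⟩ := hcobound p q r x y z hx hy hz
  have hΦη := delta_Phi3_of_cocycles hf₁ker hηker x y z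
  rw [Phi3_add_right]
  refine ⟨dga_delta_add C δ _ _ hΦ hΦη, ?_⟩
  rw [cls_add hΦ hΦη, hcls, cls_Phi3_of_cocycles hf₁ker hf₁id hηker]
  exact ZModModule.add_self _
end
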